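/- Let M ≥ 1, let S : [0,1] → [0,1] be adapted to the M-equal partition with Markov matrix B, let φ ∈ L²([0,1]), and let T ≥ 1. For a sequence τ = (b_0, …, b_T) ∈ {1,…,M}^{T+1} set Φ_τ = (1/T) ∑_{t=1}^T O_{b_t b_t}(φ). Then (1/M) ∑_{τ ∈ {1,…,M}^{T+1}} Φ_τ² · ∏_{t=0}^{T-1} B_{b_t b_{t+1}} = ∫₀¹ ((1/T) ∑_{t=1}^T \hat{φ}(S^t(x)))² dμ(x). -/

import Mathlib

open MeasureTheory Set Filter Matrix
open scoped ENNReal NNReal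

noncomputable section

/-- The atom `E_{j+1} = (j/M, (j+1)/M)` of the `M`-equal partition of `[0,1]`
(indexed by `j : Fin M`, zero-based). -/
def atomE (M : ℕ) (j : Fin M) : Set ℝ :=
  Set.Ioo ((j : ℝ) / M) (((j : ℝ) + 1) / M)

/-- The endpoint set `𝓔(M) = {i/M : 0 ≤ i ≤ M}`. -/
def endpts (M : ℕ) : Set ℝ :=
  {x : ℝ | ∃ i : ℕ, i ≤ M ∧ x = (i : ℝ) / M}

/-- The Markov matrix of `S` for the `M`-equal partition:
`B_{jk} = M · μ(E_j ∩ S⁻¹(E_k))`, where `μ` is Lebesgue measure. -/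
def markovB (S : ℝ → ℝ) (M : ℕ) (j k : Fin M) : ℝ :=
  M * (volume (atomE M j ∩ S ⁻¹' atomE M k)).toReal

/-- `S` is adapted to the `M`-equal partition: on each atom `E_j` it is affine,
`S x = a_j x + c_j` with `a_j ≠ 0`, and the values of the affine map at the two
endpoints of `E_j` belong to `𝓔(M)`. -/
def AdaptedTo (S : ℝ → ℝ) (M : ℕ) : Prop :=
  ∀ j : Fin M, ∃ a c : ℝ, a ≠ 0 ∧ (∀ x ∈ atomE M j, S x = a * x + c) ∧
    a * ((j : ℝ) / M) + c ∈ endpts M ∧ a * (((j : ℝ) + 1) / M) + c ∈ endpts M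

/-- `S` preserves Lebesgue measure `μ` on `[0,1]`:
`μ(S⁻¹(A)) = μ(A)` for every Borel `A ⊆ [0,1]` (the preimage taken inside `[0,1]`). -/
def PreservesLeb (S : ℝ → ℝ) : Prop :=
  ∀ A : Set ℝ, A ⊆ Set.Icc 0 1 → MeasurableSet A →
    volume (Set.Icc (0:ℝ) 1 ∩ S ⁻¹' A) = volume A

/-- `S` is ergodic w.r.t. Lebesgue measure on `[0,1]`: every Borel `A ⊆ [0,1]`
with `S⁻¹(A) = A` has measure `0` or `1`. -/
def ErgodicLeb (S : ℝ → ℝ) : Prop :=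
  ∀ A : Set ℝ, A ⊆ Set.Icc 0 1 → MeasurableSet A →
    Set.Icc (0:ℝ) 1 ∩ S ⁻¹' A = A → volume A = 0 ∨ volume A = 1

/-- `(M_n)` is an admissible sequence of partitions for `S`: positive integers with
`M_n ∣ M_{n+1}`, `S` adapted to each `M_n`-equal partition, and
`S^{-j}(𝓔(M_0)) ∩ [0,1] ⊆ 𝓔(M_n)` for all `1 ≤ j ≤ n`. -/
def AdmissibleSeq (S : ℝ → ℝ) (Mseq : ℕ → ℕ) : Prop :=
  (∀ n, 0 < Mseq n) ∧ (∀ n, Mseq n ∣ Mseq (n + 1)) ∧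
  (∀ n, AdaptedTo S (Mseq n)) ∧
  (∀ n j, 1 ≤ j → j ≤ n → (S^[j]) ⁻¹' endpts (Mseq 0) ∩ Set.Icc 0 1 ⊆ endpts (Mseq n))

/-- The diagonal entry of the quantized observable: `O_{jj}(φ) = M · ∫_{E_j} φ dμ`. -/
def Oquant (φ : ℝ → ℝ) (M : ℕ) (j : Fin M) : ℝ :=
  M * ∫ x in atomE M j, φ x

/-- The local average `φ̂`: equal to `O_{jj}(φ)` on each atom `E_j`, and `0`
on the endpoint set. -/
def hatPhi (φ : ℝ → ℝ) (M : ℕ) (x : ℝ) : ℝ :=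
  ∑ j : Fin M, (atomE M j).indicator (fun _ => Oquant φ M j) x

/-- The time average `O_T = (1/T) ∑_{t=0}^{T-1} (U*)^t O U^t`. -/
def timeAvg (M T : ℕ) (U O : Matrix (Fin M) (Fin M) ℂ) : Matrix (Fin M) (Fin M) ℂ :=
  ((T : ℂ))⁻¹ • ∑ t ∈ Finset.range T, (Uᴴ) ^ t * O * U ^ t

/-! ### Auxiliary lemmas for stmt_11 -/

section Aux

lemma volume_atomE' {M : ℕ} (j : Fin M) :
    volume (atomE M j) = ENNReal.ofReal (1 / M) := by
  have hM : (0:ℝ) < M := Nat.cast_pos.2 j.pos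
  rw [atomE, Real.volume_Ioo]
  congr 1
  field_simp
  ring

lemma atomE_subset_Icc' (M : ℕ) (j : Fin M) : atomE M j ⊆ Set.Icc 0 1 := by
  have hM : (0:ℝ) < M := Nat.cast_pos.2 j.pos
  rintro x ⟨h1, h2⟩
  have hj0 : (0:ℝ) ≤ (j : ℝ) / M := div_nonneg (by positivity) hM.le
  have hjM : ((j:ℕ):ℝ) + 1 ≤ M := by exact_mod_cast j.isLt
  have h3 : ((j:ℝ) + 1) / M ≤ 1 := by rw [div_le_one hM]; exact_mod_cast hjM
  exact ⟨le_of_lt (lt_of_le_of_lt hj0 h1), le_of_lt (lt_of_lt_of_le h2 h3)⟩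

lemma atomE_eq_of_mem' {M : ℕ} {j k : Fin M} {x : ℝ}
    (hj : x ∈ atomE M j) (hk : x ∈ atomE M k) : j = k := by
  have hM : (0:ℝ) < M := Nat.cast_pos.2 j.pos
  obtain ⟨hj1, hj2⟩ := hj
  obtain ⟨hk1, hk2⟩ := hk
  have hj1' : (j:ℝ) < x * M := (div_lt_iff₀ hM).1 hj1
  have hj2' : x * M < (j:ℝ) + 1 := (lt_div_iff₀ hM).1 hj2
  have hk1' : (k:ℝ) < x * M := (div_lt_iff₀ hM).1 hk1
  have hk2' : x * M < (k:ℝ) + 1 := (lt_div_iff₀ hM).1 hk2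
  have h1 : ((j:ℕ):ℝ) < ((k:ℕ):ℝ) + 1 := by linarith
  have h2 : ((k:ℕ):ℝ) < ((j:ℕ):ℝ) + 1 := by linarith
  have h1' : (j:ℕ) < (k:ℕ) + 1 := by exact_mod_cast h1
  have h2' : (k:ℕ) < (j:ℕ) + 1 := by exact_mod_cast h2
  exact Fin.ext (by omega)

lemma exists_atom' {M : ℕ} (hM : 0 < M) {x : ℝ} (hx : x ∈ Set.Icc (0:ℝ) 1)
    (hxe : x ∉ endpts M) : ∃ j : Fin M, x ∈ atomE M j := by
  have hM' : (0:ℝ) < M := Nat.cast_pos.2 hM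
  obtain ⟨hx0, hx1⟩ := hx
  have hxM : 0 ≤ x * M := by positivity
  set n := ⌊x * M⌋₊ with hn
  have h1 : (n:ℝ) ≤ x * M := Nat.floor_le hxM
  have h2 : x * M < n + 1 := Nat.lt_floor_add_one _
  have hne : (n:ℝ) ≠ x * M := by
    intro h
    apply hxe
    have hxMM : x * M ≤ M := by nlinarith
    refine ⟨n, ?_, ?_⟩
    · have : (n:ℝ) ≤ M := h ▸ hxMM
      exact_mod_cast this
    · rw [eq_div_iff hM'.ne', ← h]
  have h1' : (n:ℝ) < x * M := lt_of_le_of_ne h1 hne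
  have hnM : n < M := by
    by_contra hcon
    push_neg at hcon
    have : (M:ℝ) ≤ (n:ℝ) := by exact_mod_cast hcon
    nlinarith
  refine ⟨⟨n, hnM⟩, ?_, ?_⟩
  · show ((⟨n, hnM⟩ : Fin M) : ℝ) / M < x
    rw [div_lt_iff₀ hM']
    exact h1'
  · show x < (((⟨n, hnM⟩ : Fin M) : ℝ) + 1) / M
    rw [lt_div_iff₀ hM']
    exact h2

lemma endpts_countable' (M : ℕ) : (endpts M).Countable := by
  have h : endpts M ⊆ Set.range (fun i : ℕ => (i:ℝ) / M) := by
    rintro x ⟨i, -, rfl⟩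
    exact ⟨i, rfl⟩
  exact (Set.countable_range _).mono h

lemma preimage_countable' {S : ℝ → ℝ} {M : ℕ} (hM : 0 < M) (hadapt : AdaptedTo S M)
    {C : Set ℝ} (hC : C.Countable) : (S ⁻¹' C ∩ Set.Icc 0 1).Countable := by
  have hsub : S ⁻¹' C ∩ Set.Icc 0 1 ⊆
      endpts M ∪ ⋃ j : Fin M, (atomE M j ∩ S ⁻¹' C) := by
    rintro x ⟨hxC, hxI⟩
    by_cases he : x ∈ endpts M
    · exact Or.inl he
    · obtain ⟨j, hj⟩ := exists_atom' hM hxI he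
      exact Or.inr (Set.mem_iUnion.2 ⟨j, hj, hxC⟩)
  refine ((endpts_countable' M).union (Set.countable_iUnion fun j => ?_)).mono hsub
  obtain ⟨a, c, ha, haff, -, -⟩ := hadapt j
  have h1 : atomE M j ∩ S ⁻¹' C ⊆ (fun y => (y - c) / a) '' C := by
    rintro x ⟨hxj, hxC⟩
    refine ⟨S x, hxC, ?_⟩
    rw [haff x hxj]
    field_simp
    ring
  exact (hC.image _).mono h1

lemma iter_preimage_countable' {S : ℝ → ℝ} {M : ℕ} (hM : 0 < M) (hadapt : AdaptedTo S M)
    (hSmaps : Set.MapsTo S (Set.Icc 0 1) (Set.Icc 0 1)) (t : ℕ) :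
    ((S^[t]) ⁻¹' endpts M ∩ Set.Icc 0 1).Countable := by
  induction t with
  | zero =>
    refine (endpts_countable' M).mono ?_
    intro x hx
    simpa using hx.1
  | succ t ih =>
    have hsub : (S^[t+1]) ⁻¹' endpts M ∩ Set.Icc 0 1 ⊆
        S ⁻¹' ((S^[t]) ⁻¹' endpts M ∩ Set.Icc 0 1) ∩ Set.Icc 0 1 := by
      rintro x ⟨hx, hxI⟩
      have hSx : S x ∈ Set.Icc (0:ℝ) 1 := hSmaps hxI
      have hit : S^[t] (S x) ∈ endpts M := by
        have hx' : S^[t+1] x ∈ endpts M := hx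
        rwa [Function.iterate_succ_apply] at hx'
      exact ⟨⟨hit, hSx⟩, hxI⟩
    exact (preimage_countable' hM hadapt ih).mono hsub

lemma volume_affine_preimage' {a c : ℝ} (ha : a ≠ 0) (D : Set ℝ) :
    volume ((fun x => a * x + c) ⁻¹' D) = ENNReal.ofReal |a⁻¹| * volume D := by
  have h : (fun x : ℝ => a * x + c) ⁻¹' D = (a * ·) ⁻¹' ((· + c) ⁻¹' D) := rfl
  rw [h, Real.volume_preimage_mul_left ha, measure_preimage_add_right]

lemma grid_cases' {M : ℕ} (hM : (0:ℝ) < M) (P Q : ℕ) (k : Fin M) :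
    atomE M k ⊆ Set.Ioo ((P:ℝ)/M) ((Q:ℝ)/M) ∨
      atomE M k ∩ Set.Ioo ((P:ℝ)/M) ((Q:ℝ)/M) = ∅ := by
  by_cases h : P ≤ (k:ℕ) ∧ (k:ℕ) + 1 ≤ Q
  · left
    apply Set.Ioo_subset_Ioo
    · gcongr <;> exact_mod_cast h.1
    · have h2 : ((k:ℕ) + 1 : ℕ) ≤ Q := h.2
      gcongr <;> exact_mod_cast h2
  · right
    push_neg at h
    rw [Set.eq_empty_iff_forall_notMem]
    rintro x ⟨⟨hk1, hk2⟩, hp1, hp2⟩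
    rcases Nat.lt_or_ge (k:ℕ) P with hc | hc
    · have hle : ((k:ℕ) + 1 : ℕ) ≤ P := hc
      have : ((k:ℝ) + 1) / M ≤ (P:ℝ) / M := by
        gcongr <;> exact_mod_cast hle
      linarith
    · have hQ : Q ≤ (k:ℕ) := by
        have := h hc
        omega
      have : (Q:ℝ) / M ≤ (k:ℝ) / M := by
        gcongr <;> exact_mod_cast hQ
      linarith

lemma markov_step' {S : ℝ → ℝ} {M : ℕ} (hadapt : AdaptedTo S M) (j k : Fin M) :
    ∃ r : ℝ≥0∞, ∀ D : Set ℝ, D ⊆ atomE M k →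
      volume (atomE M j ∩ S ⁻¹' D) = r * volume D := by
  obtain ⟨a, c, ha, haff, he0, he1⟩ := hadapt j
  have hM : (0:ℝ) < M := Nat.cast_pos.2 j.pos
  obtain ⟨P, Q, h1, h2⟩ : ∃ P Q : ℕ,
      (∀ x ∈ atomE M j, a * x + c ∈ Set.Ioo ((P:ℝ)/M) ((Q:ℝ)/M)) ∧
      (∀ x : ℝ, a * x + c ∈ Set.Ioo ((P:ℝ)/M) ((Q:ℝ)/M) → x ∈ atomE M j) := by
    obtain ⟨p, -, hp⟩ := he0
    obtain ⟨q, -, hq⟩ := he1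
    rcases ha.lt_or_gt with hneg | hpos
    · refine ⟨q, p, fun x hx => ⟨?_, ?_⟩, fun x hx => ⟨?_, ?_⟩⟩
      · nlinarith [hx.1, hx.2]
      · nlinarith [hx.1, hx.2]
      · nlinarith [hx.1, hx.2]
      · nlinarith [hx.1, hx.2]
    · refine ⟨p, q, fun x hx => ⟨?_, ?_⟩, fun x hx => ⟨?_, ?_⟩⟩
      · nlinarith [hx.1, hx.2]
      · nlinarith [hx.1, hx.2]
      · nlinarith [hx.1, hx.2]
      · nlinarith [hx.1, hx.2]
  rcases grid_cases' hM P Q k with hsub | hemp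
  · refine ⟨ENNReal.ofReal |a⁻¹|, fun D hD => ?_⟩
    have hset : atomE M j ∩ S ⁻¹' D = (fun x => a * x + c) ⁻¹' D := by
      ext x
      constructor
      · rintro ⟨hxj, hxD⟩
        have : S x = a * x + c := haff x hxj
        simpa [Set.mem_preimage, ← this] using hxD
      · intro hx
        have hxj : x ∈ atomE M j := h2 x (hsub (hD hx))
        refine ⟨hxj, ?_⟩
        have : S x = a * x + c := haff x hxj
        simpa [Set.mem_preimage, this] using hx
    rw [hset, volume_affine_preimage' ha]
  · refine ⟨0, fun D hD => ?_⟩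
    rw [zero_mul]
    have hset : atomE M j ∩ S ⁻¹' D = ∅ := by
      rw [Set.eq_empty_iff_forall_notMem]
      rintro x ⟨hxj, hxD⟩
      have hfx : a * x + c ∈ Set.Ioo ((P:ℝ)/M) ((Q:ℝ)/M) := h1 x hxj
      have hSx : S x = a * x + c := haff x hxj
      have : a * x + c ∈ atomE M k := hSx ▸ hD hxD
      exact Set.eq_empty_iff_forall_notMem.1 hemp _ ⟨this, hfx⟩
    rw [hset, measure_empty]

lemma markov_coef' {S : ℝ → ℝ} {M : ℕ} (hadapt : AdaptedTo S M) (j k : Fin M)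
    (D : Set ℝ) (hD : D ⊆ atomE M k) :
    volume (atomE M j ∩ S ⁻¹' D)
      = (M : ℝ≥0∞) * volume (atomE M j ∩ S ⁻¹' atomE M k) * volume D := by
  obtain ⟨r, hr⟩ := markov_step' hadapt j k
  have hMne : (M:ℝ) ≠ 0 := (Nat.cast_pos.2 j.pos).ne'
  have h1 : (M : ℝ≥0∞) * ENNReal.ofReal (1 / M) = 1 := by
    rw [← ENNReal.ofReal_natCast M, ← ENNReal.ofReal_mul (by positivity)]
    rw [mul_one_div, div_self hMne, ENNReal.ofReal_one]
  rw [hr D hD, hr (atomE M k) subset_rfl, volume_atomE']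
  calc r * volume D = ((M : ℝ≥0∞) * ENNReal.ofReal (1/M)) * (r * volume D) := by
        rw [h1, one_mul]
    _ = (M : ℝ≥0∞) * (r * ENNReal.ofReal (1/M)) * volume D := by ring

/-- The cylinder set of a trajectory. -/
def CsetD (S : ℝ → ℝ) (M : ℕ) (n : ℕ) (τ : Fin (n+1) → Fin M) : Set ℝ :=
  ⋂ t : Fin (n+1), (S^[(t:ℕ)]) ⁻¹' atomE M (τ t)

lemma measurableSet_CsetD {S : ℝ → ℝ} (hS : Measurable S) (M n : ℕ)
    (τ : Fin (n+1) → Fin M) : MeasurableSet (CsetD S M n τ) :=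
  MeasurableSet.iInter fun t => (hS.iterate (t:ℕ)) measurableSet_Ioo

lemma CsetD_subset_atom (S : ℝ → ℝ) (M n : ℕ) (τ : Fin (n+1) → Fin M) :
    CsetD S M n τ ⊆ atomE M (τ 0) := by
  intro x hx
  have := Set.mem_iInter.1 hx 0
  simpa using this

lemma CsetD_succ (S : ℝ → ℝ) (M n : ℕ) (τ : Fin (n+2) → Fin M) :
    CsetD S M (n+1) τ = atomE M (τ 0) ∩ S ⁻¹' CsetD S M n (τ ∘ Fin.succ) := by
  ext x
  simp only [CsetD, Set.mem_iInter, Set.mem_inter_iff, Set.mem_preimage,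
    Function.comp_apply]
  constructor
  · intro h
    refine ⟨by simpa using h 0, fun s => ?_⟩
    have := h s.succ
    simpa [Fin.val_succ, Function.iterate_succ_apply] using this
  · rintro ⟨h0, h1⟩ t
    induction t using Fin.cases with
    | zero => simpa using h0
    | succ s =>
      have := h1 s
      simpa [Fin.val_succ, Function.iterate_succ_apply] using this

lemma volume_CsetD' {S : ℝ → ℝ} {M : ℕ} (hadapt : AdaptedTo S M) :
    ∀ (n : ℕ) (τ : Fin (n+1) → Fin M),
      volume (CsetD S M n τ) = ENNReal.ofReal (1 / M) *
        ∏ t : Fin n, ((M : ℝ≥0∞) *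
          volume (atomE M (τ t.castSucc) ∩ S ⁻¹' atomE M (τ t.succ))) := by
  intro n
  induction n with
  | zero =>
    intro τ
    have h : CsetD S M 0 τ = atomE M (τ 0) := by
      apply Set.Subset.antisymm (CsetD_subset_atom S M 0 τ)
      intro x hx
      apply Set.mem_iInter.2
      intro t
      have ht : t = 0 := Fin.ext (Nat.lt_one_iff.1 t.isLt)
      rw [ht]
      simpa using hx
    rw [h, volume_atomE']
    simp
  | succ n ih =>
    intro τ
    rw [CsetD_succ]
    have hsub : CsetD S M n (τ ∘ Fin.succ) ⊆ atomE M (τ 1) := by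
      have := CsetD_subset_atom S M n (τ ∘ Fin.succ)
      simpa using this
    rw [markov_coef' hadapt (τ 0) (τ 1) _ hsub, ih (τ ∘ Fin.succ)]
    rw [Fin.prod_univ_succ]
    have hprod : ∀ i : Fin n,
        ((M : ℝ≥0∞) * volume (atomE M ((τ ∘ Fin.succ) i.castSucc) ∩
            S ⁻¹' atomE M ((τ ∘ Fin.succ) i.succ)))
        = ((M : ℝ≥0∞) * volume (atomE M (τ i.succ.castSucc) ∩
            S ⁻¹' atomE M (τ i.succ.succ))) := by
      intro i
      simp only [Function.comp_apply, Fin.succ_castSucc]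
    have h0 : (0 : Fin (n+1)).succ = 1 := rfl
    have hc0 : (0 : Fin (n+1)).castSucc = 0 := rfl
    rw [Finset.prod_congr rfl (fun i _ => hprod i)]
    rw [hc0, h0]
    ring

lemma hatPhi_eq' {φ : ℝ → ℝ} {M : ℕ} {k : Fin M} {x : ℝ} (hx : x ∈ atomE M k) :
    hatPhi φ M x = Oquant φ M k := by
  unfold hatPhi
  rw [Finset.sum_eq_single k]
  · rw [Set.indicator_of_mem hx]
  · intro j _ hj
    exact Set.indicator_of_notMem (fun hxj => hj (atomE_eq_of_mem' hxj hx)) _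
  · intro h
    exact absurd (Finset.mem_univ k) h

end Aux
/-- the diagonal sum over trajectories equals the integral of the
squared ergodic average of the local average `φ̂`:
`(1/M) ∑_τ Φ_τ² ∏_t B_{b_t b_{t+1}} = ∫₀¹ ((1/T) ∑_{t=1}^T φ̂(S^t x))² dμ(x)`. -/
theorem stmt_11 (M : ℕ) (hM : 1 ≤ M) (S : ℝ → ℝ) (hSmeas : Measurable S)
    (hSmaps : Set.MapsTo S (Set.Icc 0 1) (Set.Icc 0 1))
    (hadapt : AdaptedTo S M) (φ : ℝ → ℝ)
    (hφ : MemLp φ 2 (volume.restrict (Set.Icc (0:ℝ) 1)))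
    (T : ℕ) (hT : 1 ≤ T) :
    (1 / (M : ℝ)) * ∑ τ : Fin (T + 1) → Fin M,
        ((1 / (T : ℝ)) * ∑ t : Fin T, Oquant φ M (τ t.succ)) ^ 2 *
          ∏ t : Fin T, markovB S M (τ t.castSucc) (τ t.succ)
      = ∫ x in Set.Icc (0:ℝ) 1,
          ((1 / (T : ℝ)) * ∑ t ∈ Finset.Icc 1 T, hatPhi φ M (S^[t] x)) ^ 2 := by
  have hM0 : 0 < M := hM
  set c : (Fin (T+1) → Fin M) → ℝ :=
    fun τ => ((1 / (T : ℝ)) * ∑ t : Fin T, Oquant φ M (τ t.succ)) ^ 2 with hc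
  have hvol : ∀ τ : Fin (T+1) → Fin M, (volume (CsetD S M T τ)).toReal
      = (1 / (M:ℝ)) * ∏ t : Fin T, markovB S M (τ t.castSucc) (τ t.succ) := by
    intro τ
    rw [volume_CsetD' hadapt T τ, ENNReal.toReal_mul,
      ENNReal.toReal_ofReal (by positivity), ENNReal.toReal_prod]
    congr 1
    refine Finset.prod_congr rfl fun t _ => ?_
    rw [ENNReal.toReal_mul, ENNReal.toReal_natCast]
    rfl
  have hLHS : (1 / (M : ℝ)) * ∑ τ : Fin (T + 1) → Fin M,
      c τ * ∏ t : Fin T, markovB S M (τ t.castSucc) (τ t.succ)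
      = ∑ τ : Fin (T+1) → Fin M, c τ * (volume (CsetD S M T τ)).toReal := by
    rw [Finset.mul_sum]
    refine Finset.sum_congr rfl fun τ _ => ?_
    rw [hvol τ]
    ring
  set hfun : ℝ → ℝ :=
    fun x => ∑ τ : Fin (T+1) → Fin M, (CsetD S M T τ).indicator (fun _ => c τ) x with hh
  have hCmeas : ∀ τ : Fin (T+1) → Fin M, MeasurableSet (CsetD S M T τ) :=
    measurableSet_CsetD hSmeas M T
  have hCsub : ∀ τ : Fin (T+1) → Fin M, CsetD S M T τ ⊆ Set.Icc (0:ℝ) 1 :=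
    fun τ => (CsetD_subset_atom S M T τ).trans (atomE_subset_Icc' M (τ 0))
  have hCfin : ∀ τ : Fin (T+1) → Fin M, volume (CsetD S M T τ) < ⊤ := fun τ =>
    lt_of_le_of_lt (measure_mono (hCsub τ))
      (by rw [Real.volume_Icc]; exact ENNReal.ofReal_lt_top)
  have hint : ∫ x in Set.Icc (0:ℝ) 1, hfun x
      = ∑ τ : Fin (T+1) → Fin M, c τ * (volume (CsetD S M T τ)).toReal := by
    rw [hh]
    rw [integral_finset_sum]
    · refine Finset.sum_congr rfl fun τ _ => ?_
      rw [integral_indicator_const _ (hCmeas τ)]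
      rw [measureReal_restrict_apply (hCmeas τ), Set.inter_eq_left.2 (hCsub τ), measureReal_def]
      rw [smul_eq_mul]
      ring
    · intro τ _
      rw [integrable_indicator_iff (hCmeas τ)]
      refine integrableOn_const ?_
      rw [Measure.restrict_apply (hCmeas τ), Set.inter_eq_left.2 (hCsub τ)]
      exact (hCfin τ).ne
  have hNnull : volume (⋃ t : Fin (T+1), ((S^[(t:ℕ)]) ⁻¹' endpts M ∩ Set.Icc 0 1)) = 0 :=
    (Set.countable_iUnion fun t : Fin (T+1) =>
      iter_preimage_countable' hM0 hadapt hSmaps (t:ℕ)).measure_zero _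
  have hpoint : ∀ x ∈ Set.Icc (0:ℝ) 1,
      x ∉ (⋃ t : Fin (T+1), ((S^[(t:ℕ)]) ⁻¹' endpts M ∩ Set.Icc 0 1)) →
      ((1 / (T : ℝ)) * ∑ t ∈ Finset.Icc 1 T, hatPhi φ M (S^[t] x)) ^ 2 = hfun x := by
    intro x hxI hxN
    have hbex : ∀ t : Fin (T+1), ∃ j : Fin M, S^[(t:ℕ)] x ∈ atomE M j := by
      intro t
      have hxt : S^[(t:ℕ)] x ∈ Set.Icc (0:ℝ) 1 := hSmaps.iterate (t:ℕ) hxI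
      have hxe : S^[(t:ℕ)] x ∉ endpts M := by
        intro hmem
        exact hxN (Set.mem_iUnion.2 ⟨t, hmem, hxI⟩)
      exact exists_atom' hM0 hxt hxe
    choose b hb using hbex
    have hxC : x ∈ CsetD S M T b := Set.mem_iInter.2 hb
    have hsum : ∑ t ∈ Finset.Icc 1 T, hatPhi φ M (S^[t] x)
        = ∑ s : Fin T, Oquant φ M (b s.succ) := by
      rw [← Finset.Ico_add_one_right_eq_Icc, Finset.sum_Ico_eq_sum_range]
      have hT1 : T + 1 - 1 = T := by omega
      rw [hT1]
      rw [← Fin.sum_univ_eq_sum_range (fun i => hatPhi φ M (S^[1 + i] x)) T]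
      refine Finset.sum_congr rfl fun s _ => ?_
      have h1 : (1 + (s:ℕ)) = ((s.succ : Fin (T+1)) : ℕ) := by
        rw [Fin.val_succ]
        omega
      rw [h1]
      exact hatPhi_eq' (hb s.succ)
    have hHx : hfun x = c b := by
      show (∑ τ : Fin (T+1) → Fin M, (CsetD S M T τ).indicator (fun _ => c τ) x) = c b
      rw [Finset.sum_eq_single b]
      · rw [Set.indicator_of_mem hxC]
      · intro τ _ hτ
        apply Set.indicator_of_notMem
        intro hxτ
        apply hτ
        funext t
        exact atomE_eq_of_mem' (Set.mem_iInter.1 hxτ t) (hb t)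
      · intro habs
        exact absurd (Finset.mem_univ b) habs
    rw [hsum, hHx, hc]
  have hae : (fun x => ((1 / (T : ℝ)) * ∑ t ∈ Finset.Icc 1 T, hatPhi φ M (S^[t] x)) ^ 2)
      =ᵐ[volume.restrict (Set.Icc (0:ℝ) 1)] hfun := by
    rw [Filter.EventuallyEq, ae_restrict_iff' measurableSet_Icc, ae_iff]
    refine measure_mono_null ?_ hNnull
    intro x hx
    simp only [Set.mem_setOf_eq] at hx
    push_neg at hx
    by_contra hxN
    exact hx.2 (hpoint x hx.1 hxN)
  rw [integral_congr_ae hae, hint]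
  exact hLHS
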